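/- arXiv:2003.06367 — 3 statements merged into one kernel-verified Lean document; each statement's English description precedes it below -/
import Mathlib

section
/- Let K be a finite extension of ℚ₂, a ∈ O_K^×, f = Σ f_i t^i ∈ K⟦t⟧, and let y = Σ y_i t^i be the unique solution of t(t−4a)·y' − (t−2a)·y = f. Then v_2(y_0) = v_2(f_0) − 1, v_2(y_1) ≥ min(v_2(f_0) − 2, v_2(f_1) − 1), and for i ≥ 2, v_2(y_i) ≥ min_{2 ≤ k ≤ i} v_2(f_k) − ⌊log_2(i−1)⌋ − 1. -/
/-!
Comparing coefficients turns the equation into `f₀ = 2a y₀`, `f₁ = -y₀ - 2a y₁` and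
`f_{m+2} = m y_{m+1} - 2a(2m+3) y_{m+2}`. As `2m+3` is odd, each step of the last recursion costs
one unit of valuation and recovers `v₂(m)`, so after `m` steps the total loss is
`m - v₂(m!) = s₂(m)`, the binary digit sum of `m` (Legendre), which is at most `⌊log₂(m+1)⌋`.
-/

open PowerSeries

namespace Nat

theorem digits_two_sum_add_padicValNat_succ (n : ℕ) :
    (digits 2 (n + 1)).sum + padicValNat 2 (n + 1) = (digits 2 n).sum + 1 := by
  have h₁ := sub_one_mul_padicValNat_factorial (p := 2) n
  have h₂ := sub_one_mul_padicValNat_factorial (p := 2) (n + 1)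
  have hs₁ := digit_sum_le 2 n
  have hs₂ := digit_sum_le 2 (n + 1)
  rw [factorial_succ, padicValNat.mul (succ_ne_zero n) (factorial_ne_zero n)] at h₂
  simp only [Nat.add_one_sub_one, one_mul, Nat.succ_eq_add_one] at h₁ h₂
  omega

theorem digits_two_sum_le_log (n : ℕ) : (digits 2 n).sum ≤ log 2 (n + 1) := by
  induction n using Nat.strong_induction_on with
  | _ n ih =>
    rcases n.eq_zero_or_pos with rfl | hn
    · simp
    rw [digits_def' one_lt_two hn, List.sum_cons]
    have ih' := ih (n / 2) (div_lt_self hn one_lt_two)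
    rcases n.even_or_odd' with ⟨q, rfl | rfl⟩
    · calc 2 * q % 2 + (digits 2 (2 * q / 2)).sum ≤ log 2 (2 * q / 2 + 1) := by omega
        _ ≤ log 2 (2 * q + 1) := log_mono_right (by omega)
    · have : log 2 (2 * q + 1 + 1) = log 2 ((2 * q + 1) / 2 + 1) + 1 := by
        rw [← log_mul_base one_lt_two (by omega)]; congr 1; omega
      omega

end Nat

section Valuation

variable {R : Type*} [Ring R]

theorem AddValuation.map_natCast_nonneg {Γ₀ : Type*} [LinearOrderedAddCommMonoidWithTop Γ₀]
    (v : AddValuation R Γ₀) (n : ℕ) : 0 ≤ v n := by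
  induction n with
  | zero => simp
  | succ n ih => exact Nat.cast_succ (R := R) n ▸ v.map_le_add ih v.map_one.ge

variable (v : AddValuation R (WithTop ℚ))

theorem AddValuation.map_odd_natCast (hv2 : v 2 = 1) {n : ℕ} (hn : Odd n) : v n = 0 := by
  obtain ⟨k, rfl⟩ := hn
  refine le_antisymm (not_lt.mp fun hpos => ?_) (v.map_natCast_nonneg _)
  have h2k : 0 < v (2 * k) := by
    rw [v.map_mul, hv2]
    exact lt_add_of_lt_of_nonneg (by simp) (v.map_natCast_nonneg k)
  have := v.map_sub ((2 * k + 1 : ℕ) : R) (2 * k)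
  simp only [Nat.cast_add, Nat.cast_mul, Nat.cast_ofNat, Nat.cast_one, add_sub_cancel_left,
    v.map_one] at this hpos
  exact (lt_min hpos h2k).not_ge this

theorem AddValuation.padicValNat_le_map_natCast (hv2 : v 2 = 1) (n : ℕ) :
    ((padicValNat 2 n : ℚ) : WithTop ℚ) ≤ v n := by
  obtain ⟨c, hc⟩ := pow_padicValNat_dvd (p := 2) (n := n)
  have hc : (n : R) = 2 ^ padicValNat 2 n * c := by simpa using congrArg (Nat.cast (R := R)) hc
  rw [hc, v.map_mul, v.map_pow, hv2]
  refine le_add_of_le_of_nonneg (le_of_eq ?_) (v.map_natCast_nonneg c)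
  simp

end Valuation

section ODE

variable {R : Type*} [CommRing R] {a : R} {f y : R⟦X⟧}

theorem ode_coeff_zero (hy : X * (X - C (4 * a)) * d⁄dX R y - (X - C (2 * a)) * y = f) :
    coeff 0 f = 2 * a * coeff 0 y := by
  subst hy
  simp [sub_mul, mul_sub, mul_assoc]

theorem ode_coeff_succ (hy : X * (X - C (4 * a)) * d⁄dX R y - (X - C (2 * a)) * y = f)
    (n : ℕ) :
    coeff (n + 1) f + 2 * a * (2 * n + 1) * coeff (n + 1) y = (n - 1) * coeff n y := by
  subst hy
  rcases n with _ | n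
  · simp only [zero_add, map_mul, mul_sub, sub_mul, mul_assoc, map_sub, coeff_succ_X_mul,
      coeff_zero_eq_constantCoeff, constantCoeff_X, zero_mul, coeff_C_mul, coeff_derivative,
      Nat.cast_zero, mul_one, zero_sub, mul_zero, neg_mul, one_mul]
    ring
  · simp only [map_mul, mul_sub, sub_mul, mul_assoc, map_sub, coeff_succ_X_mul, coeff_derivative,
      coeff_C_mul, Nat.cast_add, Nat.cast_one, add_sub_cancel_right]
    ring

end ODE

section Estimates

variable {R : Type*} [CommRing R] (v : AddValuation R (WithTop ℚ)) (hv2 : v 2 = 1) {a : R}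
  (ha : v a = 0) {f y : R⟦X⟧}

include hv2 ha

theorem map_two_mul_mul (x : R) : v (2 * a * x) = v x + 1 := by
  rw [v.map_mul, v.map_mul, hv2, ha, add_zero, add_comm]

theorem min_le_map_coeff_add_one
    (hy : X * (X - C (4 * a)) * d⁄dX R y - (X - C (2 * a)) * y = f) (m : ℕ) :
    min (v m + v (coeff (m + 1) y)) (v (coeff (m + 2) f)) ≤ v (coeff (m + 2) y) + 1 := by
  have hrec : 2 * a * (((2 * m + 3 : ℕ) : R) * coeff (m + 2) y) =
      m * coeff (m + 1) y - coeff (m + 2) f := by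
    have := ode_coeff_succ hy (m + 1)
    push_cast at this ⊢
    linear_combination this
  have hodd : v ((2 * m + 3 : ℕ) : R) = 0 := v.map_odd_natCast hv2 ⟨m + 1, by ring⟩
  calc min (v m + v (coeff (m + 1) y)) (v (coeff (m + 2) f))
      = min (v (m * coeff (m + 1) y)) (v (coeff (m + 2) f)) := by rw [v.map_mul]
    _ ≤ v (m * coeff (m + 1) y - coeff (m + 2) f) := v.map_sub _ _
    _ = v (coeff (m + 2) y) + 1 := by
      rw [← hrec, map_two_mul_mul v hv2 ha, v.map_mul, hodd, zero_add]

theorem inf_coeff_le_map_coeff_add_digits_sum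
    (hy : X * (X - C (4 * a)) * d⁄dX R y - (X - C (2 * a)) * y = f) (m : ℕ) :
    (Finset.Icc 2 (m + 2)).inf (fun k => v (coeff k f)) ≤
      v (coeff (m + 2) y) + (((Nat.digits 2 m).sum : ℚ) + 1 : ℚ) := by
  induction m with
  | zero =>
    simpa using min_le_map_coeff_add_one v hv2 ha hy 0
  | succ m ih =>
    set s : WithTop ℚ := (((Nat.digits 2 (m + 1)).sum : ℚ) : WithTop ℚ)
    have hs : ((((Nat.digits 2 m).sum : ℚ) + 1 : ℚ) : WithTop ℚ) =
        ((padicValNat 2 (m + 1) : ℚ) : WithTop ℚ) + s := by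
      rw [← WithTop.coe_add]
      exact_mod_cast (Nat.digits_two_sum_add_padicValNat_succ m).symm.trans (add_comm _ _)
    have hs0 : 0 ≤ s := WithTop.coe_nonneg.mpr (Nat.cast_nonneg _)
    have hprev :=
      (Finset.inf_mono (Finset.Icc_subset_Icc_right (by omega : m + 2 ≤ m + 1 + 2))).trans ih
    have hlast :
        (Finset.Icc 2 (m + 1 + 2)).inf (fun k => v (coeff k f)) ≤ v (coeff (m + 1 + 2) f) :=
      Finset.inf_le (Finset.mem_Icc.mpr ⟨by omega, le_rfl⟩)
    calc (Finset.Icc 2 (m + 1 + 2)).inf (fun k => v (coeff k f))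
        ≤ min (v (m + 1 : ℕ) + v (coeff (m + 1 + 1) y)) (v (coeff (m + 1 + 2) f)) + s := by
          rw [← min_add_add_right]
          refine le_min ?_ (hlast.trans (le_add_of_nonneg_right hs0))
          calc _ ≤ v (coeff (m + 2) y) + (((padicValNat 2 (m + 1) : ℚ) : WithTop ℚ) + s) :=
                hs ▸ hprev
            _ ≤ v (coeff (m + 2) y) + (v (m + 1 : ℕ) + s) := by
                gcongr; exact v.padicValNat_le_map_natCast hv2 _
            _ = _ := by abel
      _ ≤ v (coeff (m + 1 + 2) y) + 1 + s := by
          gcongr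
          exact min_le_map_coeff_add_one v hv2 ha hy (m + 1)
      _ = _ := by rw [WithTop.coe_add, WithTop.coe_one]; abel

end Estimates

theorem linear_ode_minus_valuation_bound_general
    {K : Type*} [Field K]
    (v : AddValuation K (WithTop ℚ)) (hv2 : v 2 = (1 : ℚ)) (a : K) (ha : v a = (0 : ℚ))
    (f y : PowerSeries K)
    (hy : X * (X - C (4 * a)) * d⁄dX K y - (X - C (2 * a)) * y = f) :
    v (coeff 0 y) + ((1 : ℚ) : WithTop ℚ) = v (coeff 0 f) ∧
    min (v (coeff 0 f)) (v (coeff 1 f) + ((1 : ℚ) : WithTop ℚ)) ≤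
      v (coeff 1 y) + ((2 : ℚ) : WithTop ℚ) ∧
    ∀ i : ℕ, 2 ≤ i →
      (Finset.Icc 2 i).inf (fun k => v (coeff k f)) ≤
        v (coeff i y) + (((Nat.log 2 (i - 1) : ℚ) + 1 : ℚ) : WithTop ℚ) := by
  rw [WithTop.coe_one] at hv2 ⊢
  rw [WithTop.coe_zero] at ha
  have hf₀ : v (coeff 0 y) + 1 = v (coeff 0 f) := by
    rw [ode_coeff_zero hy, map_two_mul_mul v hv2 ha]
  refine ⟨hf₀, ?_, fun i hi => ?_⟩
  · have hf₁ : coeff 0 y + coeff 1 f = -(2 * a * coeff 1 y) := by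
      linear_combination (by simpa using ode_coeff_succ hy 0 :
        coeff 1 f + 2 * a * coeff 1 y = -coeff 0 y)
    calc min (v (coeff 0 f)) (v (coeff 1 f) + 1)
        = min (v (coeff 0 y)) (v (coeff 1 f)) + 1 := by rw [← hf₀, min_add_add_right]
      _ ≤ v (coeff 0 y + coeff 1 f) + 1 := by gcongr; exact v.map_add _ _
      _ = v (coeff 1 y) + ((2 : ℚ) : WithTop ℚ) := by
        rw [hf₁, v.map_neg, map_two_mul_mul v hv2 ha, add_assoc, ← WithTop.coe_one,
          ← WithTop.coe_add, one_add_one_eq_two]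
  · obtain ⟨m, rfl⟩ : ∃ m, i = m + 2 := ⟨i - 2, by omega⟩
    refine (inf_coeff_le_map_coeff_add_digits_sum v hv2 ha hy m).trans ?_
    rw [show m + 2 - 1 = m + 1 by omega]
    gcongr
    exact_mod_cast Nat.add_le_add_right (Nat.digits_two_sum_le_log m) 1

/-- Valuation estimates for the solution of `t(t-4a)y' - (t-2a)y = f`:
`v₂(y₀) = v₂(f₀) - 1`, `v₂(y₁) ≥ min(v₂(f₀) - 2, v₂(f₁) - 1)`, and for `i ≥ 2`,
`v₂(yᵢ) ≥ min_{2 ≤ k ≤ i} v₂(f_k) - ⌊log₂(i-1)⌋ - 1`. -/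
theorem linear_ode_minus_valuation_bound
    {K : Type*} [Field K] [Algebra ℚ_[2] K] [FiniteDimensional ℚ_[2] K]
    (v : AddValuation K (WithTop ℚ)) (hv2 : v 2 = (1 : ℚ)) (a : K) (ha : v a = (0 : ℚ))
    (f y : PowerSeries K)
    (hy : X * (X - C (4 * a)) * d⁄dX K y - (X - C (2 * a)) * y = f) :
    v (coeff 0 y) + ((1 : ℚ) : WithTop ℚ) = v (coeff 0 f) ∧
    min (v (coeff 0 f)) (v (coeff 1 f) + ((1 : ℚ) : WithTop ℚ)) ≤
      v (coeff 1 y) + ((2 : ℚ) : WithTop ℚ) ∧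
    ∀ i : ℕ, 2 ≤ i →
      (Finset.Icc 2 i).inf (fun k => v (coeff k f)) ≤
        v (coeff i y) + (((Nat.log 2 (i - 1) : ℚ) + 1 : ℚ) : WithTop ℚ) :=
  linear_ode_minus_valuation_bound_general v hv2 a ha f y hy
end

section
/- Comparison of Gauss norms for the operator ψ_+: let K be a finite extension of ℚ₂, a ∈ O_K^×, and 0 < r < s ≤ 1. For any f ∈ K⟦t⟧ with ‖f‖_s < ∞, the solution y = ψ_+(f) of t(t−4a)y' + (t−2a)y = f satisfies ‖y‖_r ≤ max(2, 2/log(s/r)) · ‖f‖_s. -/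
/-! The coefficients satisfy `f₀ = -2a y₀` and `fₙ₊₁ = (n+1) yₙ - 2a(2n+3) yₙ₊₁` with
`‖2a(2n+3)‖ = 1/2`, so the ultrametric inequality gives by induction
`‖yₙ‖ ≤ 2 · 2ⁿ‖n!‖ · max_{k≤n} ‖f_k‖`. By Legendre's formula `2ⁿ‖n!‖ = 2^{s₂(n)} ≤ n + 1`,
where `s₂` is the binary digit sum. As `s ≤ 1`, `max_{k≤n} ‖f_k‖ ≤ ‖f‖_s / sⁿ`, and
`(n+1)(r/s)ⁿ ≤ max(1, 1/log(s/r))` because `(s/r)ⁿ ≥ 1 + n log(s/r)`. -/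

open PowerSeries Nat

theorem two_pow_sum_digits_two_le (n : ℕ) : 2 ^ (Nat.digits 2 n).sum ≤ n + 1 := by
  induction n using Nat.strong_induction_on with
  | _ n ih =>
    rcases Nat.eq_zero_or_pos n with rfl | hn
    · simp
    rw [Nat.digits_def' one_lt_two hn, List.sum_cons, pow_add]
    have := ih (n / 2) (Nat.div_lt_self hn one_lt_two)
    rcases Nat.mod_two_eq_zero_or_one n with h | h <;> rw [h] <;> omega

section Ultrametric

variable {K : Type*} [NormedField K] [IsUltrametricDist K]

theorem norm_natCast_of_odd (h2 : ‖(2 : K)‖ = 1 / 2) {n : ℕ} (hn : Odd n) : ‖(n : K)‖ = 1 := by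
  obtain ⟨k, rfl⟩ := hn
  have hlt : ‖(2 * k : K)‖ < ‖(1 : K)‖ := by
    rw [norm_mul, h2, norm_one]
    linarith [IsUltrametricDist.norm_natCast_le_one K k]
  push_cast
  rw [IsUltrametricDist.norm_add_eq_max_of_norm_ne_norm hlt.ne, max_eq_right hlt.le, norm_one]

theorem norm_natCast_eq_pow_padicValNat (h2 : ‖(2 : K)‖ = 1 / 2) {n : ℕ} (hn : n ≠ 0) :
    ‖(n : K)‖ = (1 / 2) ^ padicValNat 2 n := by
  obtain ⟨k, m, hm, rfl⟩ := Nat.exists_eq_two_pow_mul_odd hn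
  rw [padicValNat.mul (by positivity) hm.pos.ne', padicValNat.prime_pow,
    padicValNat.eq_zero_of_not_dvd hm.not_two_dvd_nat, add_zero]
  push_cast
  rw [norm_mul, norm_pow, h2, norm_natCast_of_odd h2 hm, mul_one]

theorem two_pow_mul_norm_factorial (h2 : ‖(2 : K)‖ = 1 / 2) (n : ℕ) :
    2 ^ n * ‖(n ! : K)‖ = 2 ^ (Nat.digits 2 n).sum := by
  have hlegendre := sub_one_mul_padicValNat_factorial (p := 2) n
  have hsum := Nat.digit_sum_le 2 n
  obtain ⟨v, d, hv, hd, hn⟩ :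
      ∃ v d, padicValNat 2 n ! = v ∧ (Nat.digits 2 n).sum = d ∧ n = v + d :=
    ⟨_, _, rfl, rfl, by omega⟩
  rw [norm_natCast_eq_pow_padicValNat h2 (factorial_ne_zero n), hv, hd, hn, pow_add,
    mul_right_comm, ← mul_pow]
  norm_num

theorem one_le_two_pow_mul_norm_factorial (h2 : ‖(2 : K)‖ = 1 / 2) (n : ℕ) :
    1 ≤ 2 ^ n * ‖(n ! : K)‖ := by
  rw [two_pow_mul_norm_factorial h2]
  exact one_le_pow₀ one_le_two

theorem two_pow_mul_norm_factorial_le (h2 : ‖(2 : K)‖ = 1 / 2) (n : ℕ) :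
    2 ^ n * ‖(n ! : K)‖ ≤ n + 1 := by
  rw [two_pow_mul_norm_factorial h2]
  exact_mod_cast two_pow_sum_digits_two_le n

end Ultrametric

section Recursion

variable {R : Type*} [CommRing R] {a : R} {f y : R⟦X⟧}

theorem coeff_X_mul_derivative (y : R⟦X⟧) (n : ℕ) :
    coeff n (X * d⁄dX R y) = n * coeff n y := by
  cases n with
  | zero => simp
  | succ n => rw [coeff_succ_X_mul, coeff_derivative]; push_cast; ring

theorem coeff_zero_eq_of_psi (hy : X * (X - C (4 * a)) * d⁄dX R y + (X - C (2 * a)) * y = f) :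
    coeff 0 f = -(2 * a) * coeff 0 y := by
  rw [← hy]
  simp [mul_assoc, sub_mul]

theorem coeff_succ_eq_of_psi (hy : X * (X - C (4 * a)) * d⁄dX R y + (X - C (2 * a)) * y = f)
    (n : ℕ) :
    coeff (n + 1) f = (n + 1) * coeff n y - 2 * a * (2 * n + 3) * coeff (n + 1) y := by
  have h : X * (X - C (4 * a)) * d⁄dX R y + (X - C (2 * a)) * y
      = X * (X * d⁄dX R y + y) - C (4 * a) * (X * d⁄dX R y) - C (2 * a) * y := by ring
  rw [← hy, h, map_sub, map_sub, coeff_succ_X_mul, map_add, coeff_C_mul, coeff_C_mul,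
    coeff_X_mul_derivative, coeff_X_mul_derivative]
  push_cast
  ring

end Recursion

theorem add_one_mul_pow_le_max {q : ℝ} (hq0 : 0 < q) (hq1 : q < 1) (n : ℕ) :
    (n + 1) * q ^ n ≤ max 1 (1 / Real.log q⁻¹) := by
  set c := Real.log q⁻¹ with hc
  have hc0 : 0 < c := Real.log_pos ((one_lt_inv₀ hq0).2 hq1)
  have hexp : (1 + c * n) * q ^ n ≤ 1 := by
    have h := Real.add_one_le_exp (c * n)
    rw [Real.exp_mul, hc, Real.exp_log (inv_pos.2 hq0), Real.rpow_natCast, inv_pow] at h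
    rwa [← le_div_iff₀ (by positivity), div_eq_mul_inv, one_mul, add_comm]
  have hlin : (n + 1 : ℝ) ≤ max 1 (1 / c) * (1 + c * n) := by
    rcases le_or_gt 1 c with h | h
    · calc (n + 1 : ℝ) ≤ 1 + c * n := by nlinarith [(Nat.cast_nonneg n : (0 : ℝ) ≤ n)]
        _ ≤ max 1 (1 / c) * (1 + c * n) := le_mul_of_one_le_left (by positivity) (le_max_left _ _)
    · calc (n + 1 : ℝ) ≤ 1 / c + n := by linarith [(one_lt_div hc0).2 h]
        _ = 1 / c * (1 + c * n) := by field_simp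
        _ ≤ max 1 (1 / c) * (1 + c * n) := by gcongr; exact le_max_right _ _
  calc (n + 1) * q ^ n ≤ max 1 (1 / c) * ((1 + c * n) * q ^ n) := by
        rw [← mul_assoc]; gcongr
    _ ≤ max 1 (1 / c) := mul_le_of_le_one_right (by positivity) hexp

section CoefficientBound

variable {K : Type*} [NormedField K] [IsUltrametricDist K] {a : K} {f y : K⟦X⟧}

theorem norm_coeff_le_of_psi (h2 : ‖(2 : K)‖ = 1 / 2) (ha : ‖a‖ = 1)
    (hy : X * (X - C (4 * a)) * d⁄dX K y + (X - C (2 * a)) * y = f) {M : ℝ} (n : ℕ)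
    (hf : ∀ k ≤ n, ‖coeff k f‖ ≤ M) :
    ‖coeff n y‖ ≤ 2 * (2 ^ n * ‖(n ! : K)‖) * M := by
  induction n with
  | zero =>
    have h0 : ‖coeff 0 f‖ = ‖coeff 0 y‖ / 2 := by
      rw [coeff_zero_eq_of_psi hy, norm_mul, norm_neg, norm_mul, h2, ha]; ring
    have := hf 0 le_rfl
    simp only [pow_zero, factorial_zero, cast_one, norm_one]
    linarith
  | succ n ih =>
    have hM : 0 ≤ M := (norm_nonneg _).trans (hf 0 (zero_le _))
    have hodd : ‖(2 * n + 3 : K)‖ = 1 := by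
      exact_mod_cast norm_natCast_of_odd h2 (⟨n + 1, by ring⟩ : Odd (2 * n + 3))
    have hstep : ‖coeff (n + 1) y‖ = 2 * ‖(n + 1 : K) * coeff n y - coeff (n + 1) f‖ := by
      rw [coeff_succ_eq_of_psi hy, sub_sub_cancel, norm_mul, norm_mul, norm_mul, h2, ha, hodd]
      ring
    have hfact :
        2 ^ (n + 1) * ‖((n + 1)! : K)‖ = ‖(n + 1 : K)‖ * (2 * (2 ^ n * ‖(n ! : K)‖)) := by
      push_cast [factorial_succ]
      rw [norm_mul, pow_succ]
      ring
    have hy_n : ‖(n + 1 : K) * coeff n y‖ ≤ 2 ^ (n + 1) * ‖((n + 1)! : K)‖ * M := by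
      rw [norm_mul, hfact, mul_assoc]
      gcongr
      exact ih fun k hk => hf k (hk.trans n.le_succ)
    have hf_n : ‖coeff (n + 1) f‖ ≤ 2 ^ (n + 1) * ‖((n + 1)! : K)‖ * M :=
      (hf (n + 1) le_rfl).trans
        (le_mul_of_one_le_left hM (one_le_two_pow_mul_norm_factorial h2 (n + 1)))
    rw [hstep, mul_assoc, sub_eq_add_neg]
    gcongr
    refine (IsUltrametricDist.norm_add_le_max _ _).trans (max_le hy_n ?_)
    rwa [norm_neg]

theorem norm_coeff_le_two_mul_add_one_mul_of_psi (h2 : ‖(2 : K)‖ = 1 / 2) (ha : ‖a‖ = 1)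
    (hy : X * (X - C (4 * a)) * d⁄dX K y + (X - C (2 * a)) * y = f) {M : ℝ} (n : ℕ)
    (hf : ∀ k ≤ n, ‖coeff k f‖ ≤ M) :
    ‖coeff n y‖ ≤ 2 * (n + 1) * M := by
  have hM : 0 ≤ M := (norm_nonneg _).trans (hf 0 (zero_le _))
  refine (norm_coeff_le_of_psi h2 ha hy n hf).trans ?_
  gcongr
  exact two_pow_mul_norm_factorial_le h2 n

end CoefficientBound

theorem psi_plus_gauss_norm_bound_general
    {K : Type*} [NormedField K]
    (hna : IsNonarchimedean (norm : K → ℝ)) (h2 : ‖(2 : K)‖ = 1 / 2)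
    (a : K) (ha : ‖a‖ = 1)
    (r s : ℝ) (hr : 0 < r) (hrs : r < s) (hs : s ≤ 1)
    (f y : PowerSeries K) (Nf : ℝ)
    (hNf : IsLUB (Set.range fun n : ℕ => ‖coeff n f‖ * s ^ n) Nf)
    (hy : X * (X - C (4 * a)) * d⁄dX K y + (X - C (2 * a)) * y = f) :
    ∀ n : ℕ, ‖coeff n y‖ * r ^ n ≤ max 2 (2 / Real.log (s / r)) * Nf := by
  have : IsUltrametricDist K := IsUltrametricDist.isUltrametricDist_of_isNonarchimedean_norm hna
  intro n
  have hs0 : 0 < s := hr.trans hrs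
  have hNf0 : 0 ≤ Nf := (by positivity : 0 ≤ ‖coeff 0 f‖ * s ^ 0).trans (hNf.1 ⟨0, rfl⟩)
  have hf : ∀ k ≤ n, ‖coeff k f‖ ≤ Nf / s ^ n := fun k hk => by
    rw [le_div_iff₀ (by positivity)]
    calc ‖coeff k f‖ * s ^ n ≤ ‖coeff k f‖ * s ^ k := by
          gcongr ‖coeff k f‖ * ?_
          exact pow_le_pow_of_le_one hs0.le hs hk
      _ ≤ Nf := hNf.1 ⟨k, rfl⟩
  have hpow := add_one_mul_pow_le_max (div_pos hr hs0) ((div_lt_one hs0).2 hrs) n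
  rw [inv_div] at hpow
  calc ‖coeff n y‖ * r ^ n ≤ 2 * (n + 1) * (Nf / s ^ n) * r ^ n := by
        gcongr
        exact norm_coeff_le_two_mul_add_one_mul_of_psi h2 ha hy n hf
    _ = 2 * ((n + 1) * (r / s) ^ n) * Nf := by
        rw [div_pow]
        field_simp
    _ ≤ 2 * max 1 (1 / Real.log (s / r)) * Nf := by gcongr
    _ = max 2 (2 / Real.log (s / r)) * Nf := by
        rw [mul_max_of_nonneg _ _ zero_le_two, mul_one, mul_one_div]

/-- Gauss norm comparison for `ψ₊`: if `y` solves `t(t-4a)y' + (t-2a)y = f` and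
`‖f‖_s = Nf`, then `‖y‖_r ≤ max(2, 2/log(s/r))·Nf` for `0 < r < s ≤ 1`. -/
theorem psi_plus_gauss_norm_bound
    {K : Type*} [NormedField K] [Algebra ℚ_[2] K] [FiniteDimensional ℚ_[2] K]
    (hna : IsNonarchimedean (norm : K → ℝ)) (h2 : ‖(2 : K)‖ = 1 / 2)
    (a : K) (ha : ‖a‖ = 1)
    (r s : ℝ) (hr : 0 < r) (hrs : r < s) (hs : s ≤ 1)
    (f y : PowerSeries K) (Nf : ℝ)
    (hNf : IsLUB (Set.range fun n : ℕ => ‖coeff n f‖ * s ^ n) Nf)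
    (hy : X * (X - C (4 * a)) * d⁄dX K y + (X - C (2 * a)) * y = f) :
    ∀ n : ℕ, ‖coeff n y‖ * r ^ n ≤ max 2 (2 / Real.log (s / r)) * Nf :=
  psi_plus_gauss_norm_bound_general hna h2 a ha r s hr hrs hs f y Nf hNf hy
end

section
/- Differential of the solution map: let K be a field of characteristic zero, a ∈ K nonzero, n ≥ 1, and for an invertible g ∈ K⟦t⟧/(t^n) let z_g ∈ t·K⟦t⟧/(t^{n+1}) denote the unique nonzero solution of t(t−4a)(z')² = g²·V(z) modulo t^{n+1} (for fixed V of t-adic valuation 1). If δz is a first-order variation satisfying the linearized equation 2t(t−4a)z_g'·(δz)' = 2g·δg·V(z_g) + g²·V'(z_g)·δz, and z_g' and g are units, then δz = t(t−4a)·z_g'·g^{−1}·ψ_{+}(δg) modulo t^{n+1}, where ψ_+ solves t(t−4a)y' + (t−2a)y = δg. -/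
open PowerSeries

/-- Composition `V ∘ z` of formal power series, valid when `z` has zero constant term. -/
noncomputable def PowerSeries.compSeries {K : Type*} [CommRing K] (V z : PowerSeries K) :
    PowerSeries K :=
  PowerSeries.mk fun n => ∑ k ∈ Finset.range (n + 1),
    (PowerSeries.coeff k V) * (PowerSeries.coeff n (z ^ k))

/-!
Put `A = t (t - 4a)`, `W = V(z)` and `E = A z'² - g² W`, so that `t^(n+1) ∣ E` and hence
`t^(n+1) ∣ A E'`. By the chain rule `V(z)' = V'(z) z'` and the equation for `y`, the candidate
`w = A z' g⁻¹ y` satisfies `g² L w = g y (A E') + 2 (g δg - A g' y) E` for the linearized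
operator `L w = 2 A z' w' - 2 g δg W - g² V'(z) w`, so it solves the linearized equation
modulo `t^(n+1)`.
The difference `u = δz - w` then solves `2 t B u' = c u` with `B = (t - 4a) z'`, `c = g² V'(z)`,
and the coefficient of `t` in the equation for `z` gives `B(0) = c(0) ≠ 0`. The indicial
equation `(2m - 1) c(0) = 0` has no integer root, so `u ≡ 0`.
-/

namespace PowerSeries

section CompSeries

variable {R : Type*} [CommRing R]

theorem compSeries_eq_subst (V : R⟦X⟧) {z : R⟦X⟧} (hz : constantCoeff z = 0) :
    V.compSeries z = V.subst z := by
  ext n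
  rw [coeff_subst' (HasSubst.of_constantCoeff_zero' hz), compSeries, coeff_mk,
    finsum_eq_sum_of_support_subset _ (s := Finset.range (n + 1))]
  · simp only [smul_eq_mul]
  · intro k hk
    simp only [Function.mem_support, Finset.coe_range, Set.mem_Iio] at hk ⊢
    by_contra hkn
    apply hk
    rw [X_pow_dvd_iff.mp (pow_dvd_pow_of_dvd (X_dvd_iff.mpr hz) k) n (by omega), smul_zero]

theorem derivative_compSeries (V : R⟦X⟧) {z : R⟦X⟧} (hz : constantCoeff z = 0) :
    d⁄dX R (V.compSeries z) = (d⁄dX R V).compSeries z * d⁄dX R z := by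
  rw [compSeries_eq_subst _ hz, compSeries_eq_subst _ hz,
    derivative_subst (HasSubst.of_constantCoeff_zero' hz)]

theorem constantCoeff_compSeries (V z : R⟦X⟧) :
    constantCoeff (V.compSeries z) = constantCoeff V := by
  rw [← coeff_zero_eq_constantCoeff_apply, ← coeff_zero_eq_constantCoeff_apply]
  simp [compSeries]

theorem coeff_one_compSeries (V z : R⟦X⟧) :
    coeff 1 (V.compSeries z) = coeff 1 V * coeff 1 z := by
  simp [compSeries, Finset.sum_range_succ]

end CompSeries

theorem constantCoeff_derivative {R : Type*} [CommSemiring R] (f : R⟦X⟧) :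
    constantCoeff (d⁄dX R f) = coeff 1 f := by
  simp [← coeff_zero_eq_constantCoeff_apply, coeff_derivative]

theorem X_pow_dvd_derivative {R : Type*} [CommSemiring R] {N : ℕ} {f : R⟦X⟧}
    (h : X ^ (N + 1) ∣ f) : X ^ N ∣ d⁄dX R f := by
  rw [X_pow_dvd_iff] at h ⊢
  intro m hm
  rw [coeff_derivative, h (m + 1) (by omega), zero_mul]

theorem X_mul_derivative_X_pow {R : Type*} [CommSemiring R] (m : ℕ) :
    X * d⁄dX R (X ^ m : R⟦X⟧) = (m : R⟦X⟧) * X ^ m := by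
  rw [derivative_pow, derivative_X, mul_one]
  rcases m with _ | m
  · simp
  · rw [Nat.add_sub_cancel, pow_succ']
    ring

theorem X_pow_dvd_of_X_pow_dvd_two_mul_X_mul_derivative_sub
    {K : Type*} [CommRing K] [IsDomain K] [CharZero K] {N : ℕ} {B c u : K⟦X⟧}
    (hc : constantCoeff c ≠ 0) (hB : constantCoeff B = constantCoeff c)
    (h : X ^ N ∣ 2 * X * B * d⁄dX K u - c * u) : X ^ N ∣ u := by
  suffices ∀ m ≤ N, X ^ m ∣ u from this N le_rfl
  intro m
  induction m with
  | zero => simp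
  | succ m ih =>
    intro hm
    obtain ⟨v, rfl⟩ := ih (by omega)
    have hexpand : 2 * X * B * d⁄dX K (X ^ m * v) - c * (X ^ m * v) =
        X ^ m * ((2 * (m : K⟦X⟧) * B - c) * v + 2 * X * B * d⁄dX K v) := by
      rw [Derivation.leibniz, smul_eq_mul, smul_eq_mul]
      linear_combination (2 * B * v) * X_mul_derivative_X_pow (R := K) m
    have hcoeff := X_pow_dvd_iff.mp h m (by omega)
    rw [hexpand, coeff_X_pow_mul', if_pos le_rfl, Nat.sub_self,
      coeff_zero_eq_constantCoeff_apply] at hcoeff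
    simp only [map_add, map_mul, map_sub, map_natCast, map_ofNat, constantCoeff_X, hB,
      mul_zero, zero_mul, add_zero] at hcoeff
    have hindicial : 2 * (m : K) * constantCoeff c - constantCoeff c ≠ 0 := by
      rw [← sub_one_mul]
      exact mul_ne_zero (sub_ne_zero.mpr (by exact_mod_cast (by omega : 2 * m ≠ 1))) hc
    rw [pow_succ]
    exact mul_dvd_mul_left _ (X_dvd_iff.mpr ((mul_eq_zero.mp hcoeff).resolve_left hindicial))

theorem constantCoeff_mul_derivative_eq_of_X_sq_dvd {K : Type*} [CommRing K] [IsDomain K]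
    {B g V z : K⟦X⟧} (hV0 : constantCoeff V = 0) (hz1 : constantCoeff (d⁄dX K z) ≠ 0)
    (h : X ^ 2 ∣ X * B * (d⁄dX K z) ^ 2 - g ^ 2 * V.compSeries z) :
    constantCoeff (B * d⁄dX K z) = constantCoeff (g ^ 2 * (d⁄dX K V).compSeries z) := by
  have h1 := X_pow_dvd_iff.mp h 1 one_lt_two
  rw [constantCoeff_derivative] at hz1
  simp only [map_sub, coeff_one_mul, coeff_one_compSeries, constantCoeff_compSeries, hV0,
    coeff_one_X, constantCoeff_X, map_mul, map_pow, constantCoeff_derivative] at h1 ⊢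
  apply mul_right_cancel₀ hz1
  linear_combination h1

end PowerSeries

theorem sq_mul_linearization_eq {R S : Type*} [CommRing R] [CommRing S] [Algebra R S]
    (D : Derivation R S S) {A z W W' g y w δg : S}
    (hW : D W = W' * D z) (hw : g * w = A * D z * y) (hδg : 2 * δg = 2 * A * D y + D A * y) :
    g ^ 2 * (2 * A * D z * D w - (2 * g * δg * W + g ^ 2 * W' * w)) =
      g * y * (A * D (A * D z ^ 2 - g ^ 2 * W)) +
        2 * (g * δg - A * D g * y) * (A * D z ^ 2 - g ^ 2 * W) := by
  have hDw : D g * w + g * D w = D A * D z * y + A * D (D z) * y + A * D z * D y := by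
    have := congrArg D hw
    simp only [Derivation.leibniz, smul_eq_mul] at this
    linear_combination this
  simp only [map_sub, Derivation.leibniz, Derivation.leibniz_pow, smul_eq_mul, nsmul_eq_mul, hW]
  linear_combination (2 * A * D z * g) * hDw + (-2 * A * D z * D g - g ^ 3 * W') * hw -
    (A * g * D z ^ 2) * hδg

theorem solution_map_differential_general
    {K : Type*} [Field K] [CharZero K] (a : K) (ha : a ≠ 0) (n : ℕ) (hn : 1 ≤ n)
    (g V z δz δg y : PowerSeries K)
    (hg : constantCoeff g ≠ 0)
    (hV0 : constantCoeff V = 0)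
    (hz0 : constantCoeff z = 0) (hz1 : constantCoeff (d⁄dX K z) ≠ 0)
    (hzsol : X ^ (n + 1) ∣
      X * (X - C (4 * a)) * (d⁄dX K z) ^ 2 - g ^ 2 * V.compSeries z)
    (hlin : X ^ (n + 1) ∣
      C (2 : K) * X * (X - C (4 * a)) * d⁄dX K z * d⁄dX K δz -
        (C (2 : K) * g * δg * V.compSeries z + g ^ 2 * (d⁄dX K V).compSeries z * δz))
    (hy : X * (X - C (4 * a)) * d⁄dX K y + (X - C (2 * a)) * y = δg) :
    X ^ (n + 1) ∣ δz - X * (X - C (4 * a)) * d⁄dX K z * g⁻¹ * y := by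
  set A : K⟦X⟧ := X * (X - C (4 * a)) with hA
  set W := V.compSeries z
  set W' := (d⁄dX K V).compSeries z
  set w := A * d⁄dX K z * g⁻¹ * y
  have hDA : d⁄dX K A = 2 * (X - C (2 * a)) := by
    simp only [hA, Derivation.leibniz, smul_eq_mul, map_sub, derivative_X, derivative_C]
    rw [show (4 : K) * a = 2 * (2 * a) by ring, map_mul, map_ofNat]
    ring
  have hgw : g * w = A * d⁄dX K z * y := by
    linear_combination (A * d⁄dX K z * y) * PowerSeries.mul_inv_cancel g hg
  have hw : X ^ (n + 1) ∣
      2 * A * d⁄dX K z * d⁄dX K w - (2 * g * δg * W + g ^ 2 * W' * w) := by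
    have hE : X ^ (n + 1) ∣ A * d⁄dX K (A * d⁄dX K z ^ 2 - g ^ 2 * W) := by
      rw [pow_succ', hA, mul_assoc]
      exact mul_dvd_mul_left X ((X_pow_dvd_derivative hzsol).mul_left _)
    rw [← ((isUnit_iff_constantCoeff.mpr hg.isUnit).pow 2).dvd_mul_left,
      sq_mul_linearization_eq _ (derivative_compSeries V hz0) hgw (by rw [← hy, hDA]; ring)]
    exact dvd_add (hE.mul_left _) (hzsol.mul_left _)
  have hδz : X ^ (n + 1) ∣
      2 * A * d⁄dX K z * d⁄dX K δz - (2 * g * δg * W + g ^ 2 * W' * δz) := by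
    convert hlin using 1
    rw [map_ofNat]
    ring
  have hB := constantCoeff_mul_derivative_eq_of_X_sq_dvd hV0 hz1
    ((pow_dvd_pow X (by omega : 2 ≤ n + 1)).trans hzsol)
  refine X_pow_dvd_of_X_pow_dvd_two_mul_X_mul_derivative_sub ?_ hB ?_
  · rw [← hB]
    simpa [ha] using hz1
  · convert dvd_sub hδz hw using 1
    rw [map_sub]
    ring

/-- Differential of the solution map of `t(t-4a)(z')² = g²·V(z)`: a first-order
variation `δz` satisfying the linearized equation equals
`t(t-4a)·z'·g⁻¹·ψ₊(δg)` modulo `t^(n+1)`. -/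
theorem solution_map_differential
    {K : Type*} [Field K] [CharZero K] (a : K) (ha : a ≠ 0) (n : ℕ) (hn : 1 ≤ n)
    (g V z δz δg y : PowerSeries K)
    (hg : constantCoeff g ≠ 0)
    (hV0 : constantCoeff V = 0) (hV1 : coeff 1 V ≠ 0)
    (hz0 : constantCoeff z = 0) (hz1 : constantCoeff (d⁄dX K z) ≠ 0)
    (hzsol : X ^ (n + 1) ∣
      X * (X - C (4 * a)) * (d⁄dX K z) ^ 2 - g ^ 2 * V.compSeries z)
    (hlin : X ^ (n + 1) ∣
      C (2 : K) * X * (X - C (4 * a)) * d⁄dX K z * d⁄dX K δz -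
        (C (2 : K) * g * δg * V.compSeries z + g ^ 2 * (d⁄dX K V).compSeries z * δz))
    (hy : X * (X - C (4 * a)) * d⁄dX K y + (X - C (2 * a)) * y = δg) :
    X ^ (n + 1) ∣ δz - X * (X - C (4 * a)) * d⁄dX K z * g⁻¹ * y :=
  solution_map_differential_general a ha n hn g V z δz δg y hg hV0 hz0 hz1 hzsol hlin hy
end
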